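/- arXiv:2403.01392 — 4 statements merged into one kernel-verified Lean document; each statement's English description precedes it below -/
import Mathlib

section
/- Let 0 ≤ η₁, η₂ ≤ 1. The pair of noisy identity qubit channels (Λ_{η₁}, Λ_{η₂}) is min-tensor-compatible (i.e., a joint map exists) if and only if η₁² + η₂² ≤ 1. -/
open Matrix Kronecker
open scoped ComplexOrder

noncomputable section

/-- 2×2 complex matrices. -/
abbrev M2 : Type := Matrix (Fin 2) (Fin 2) ℂ

/-- 4×4 complex matrices, identified with `M2 ⊗ M2` via the Kronecker product. -/
abbrev M4 : Type := Matrix (Fin 2 × Fin 2) (Fin 2 × Fin 2) ℂ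

/-- The noisy identity qubit channel `Λ_η(A) = η A + ((1-η)/2) tr(A) I` (Heisenberg picture). -/
def noisyId (η : ℝ) (A : M2) : M2 :=
  (η : ℂ) • A + (((1 - η) / 2 : ℝ) : ℂ) • (A.trace • (1 : M2))

/-- `Λ` is a joint map for the pair `(Λ_{η₁}, Λ_{η₂})` of noisy identity channels:
it sends Kronecker products of positive semidefinite matrices to positive semidefinite
matrices and has the two channels as its margins. -/
def IsJointMap (η₁ η₂ : ℝ) (Λ : M4 →ₗ[ℂ] M2) : Prop :=
  (∀ A B : M2, A.PosSemidef → B.PosSemidef → (Λ (A ⊗ₖ B)).PosSemidef) ∧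
  (∀ X : M2, Λ (X ⊗ₖ (1 : M2)) = noisyId η₁ X) ∧
  (∀ Y : M2, Λ ((1 : M2) ⊗ₖ Y) = noisyId η₂ Y)

lemma form2 (A : M2) (x : Fin 2 → ℂ) :
    dotProduct (star x) (A *ᵥ x) =
      (starRingEnd ℂ) (x 0) * (A 0 0 * x 0 + A 0 1 * x 1)
        + (starRingEnd ℂ) (x 1) * (A 1 0 * x 0 + A 1 1 * x 1) := by
  simp [dotProduct, mulVec, Fin.sum_univ_two, mul_comm]

lemma psd2 {r0 r1 : ℝ} {c : ℂ} (N : M2)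
    (hN : N = !![(r0:ℂ), c; (starRingEnd ℂ) c, (r1:ℂ)])
    (htr : 0 ≤ r0 + r1) (hd : Complex.normSq c ≤ r0 * r1) : N.PosSemidef := by
  have h0 : 0 ≤ r0 := by nlinarith [Complex.normSq_nonneg c]
  have h1 : 0 ≤ r1 := by nlinarith [Complex.normSq_nonneg c]
  rw [Matrix.posSemidef_iff_dotProduct_mulVec]
  constructor
  · rw [hN]
    ext i j
    fin_cases i <;> fin_cases j <;>
      simp [Matrix.conjTranspose_apply, Complex.ext_iff]
  · intro x
    rw [form2, hN]
    set x0 := x 0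
    set x1 := x 1
    have key : ((starRingEnd ℂ) x0 * ((r0:ℂ) * x0 + c * x1)
        + (starRingEnd ℂ) x1 * ((starRingEnd ℂ) c * x0 + (r1:ℂ) * x1))
        = ((r0 * Complex.normSq x0 + r1 * Complex.normSq x1
            + 2 * (c * (starRingEnd ℂ) x0 * x1).re : ℝ) : ℂ) := by
      simp only [Complex.ext_iff, Complex.add_re, Complex.add_im, Complex.mul_re,
        Complex.mul_im, Complex.normSq_apply, Complex.ofReal_re, Complex.ofReal_im,
        Complex.conj_re, Complex.conj_im]
      constructor <;> ring
    have entry : ∀ (u v w z : ℂ), (!![u, v; w, z] : M2) 0 0 = u ∧ (!![u, v; w, z] : M2) 0 1 = v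
        ∧ (!![u, v; w, z] : M2) 1 0 = w ∧ (!![u, v; w, z] : M2) 1 1 = z := by
      intro u v w z; refine ⟨rfl, rfl, rfl, rfl⟩
    rw [(entry _ _ _ _).1, (entry _ _ _ _).2.1, (entry _ _ _ _).2.2.1, (entry _ _ _ _).2.2.2, key]
    rw [Complex.zero_le_real]
    have hn0 := Complex.normSq_nonneg x0
    have hn1 := Complex.normSq_nonneg x1
    have ht2 : (c * (starRingEnd ℂ) x0 * x1).re ^ 2 ≤ Complex.normSq c * (Complex.normSq x0 * Complex.normSq x1) := by
      have := Complex.sq_norm (c * (starRingEnd ℂ) x0 * x1)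
      have habs : (c * (starRingEnd ℂ) x0 * x1).re ^ 2 ≤ Complex.normSq (c * (starRingEnd ℂ) x0 * x1) := by
        rw [Complex.normSq_apply]; nlinarith [sq_nonneg ((c * (starRingEnd ℂ) x0 * x1).im)]
      simpa [_root_.map_mul, Complex.normSq_conj, mul_assoc] using habs
    have hu : 0 ≤ r0 * Complex.normSq x0 + r1 * Complex.normSq x1 :=
      add_nonneg (mul_nonneg h0 hn0) (mul_nonneg h1 hn1)
    nlinarith [sq_nonneg (r0 * Complex.normSq x0 - r1 * Complex.normSq x1), hu, ht2,
      mul_le_mul_of_nonneg_right hd (mul_nonneg hn0 hn1),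
      sq_nonneg (r0 * Complex.normSq x0 + r1 * Complex.normSq x1 + 2 * (c * (starRingEnd ℂ) x0 * x1).re)]

lemma psd2_real {A : M2} (h : A.PosSemidef) :
    A 0 0 = ((A 0 0).re : ℂ) ∧ A 1 1 = ((A 1 1).re : ℂ) ∧ A 1 0 = (starRingEnd ℂ) (A 0 1) ∧
      0 ≤ (A 0 0).re ∧ 0 ≤ (A 1 1).re ∧
      Complex.normSq (A 0 1) ≤ (A 0 0).re * (A 1 1).re := by
  have h10 : A 1 0 = (starRingEnd ℂ) (A 0 1) := (h.1.apply 1 0).symm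
  have h00 : A 0 0 = ((A 0 0).re : ℂ) := by
    have := h.1.apply 0 0
    have him : (A 0 0).im = 0 := Complex.conj_eq_iff_im.mp this
    exact (Complex.conj_eq_iff_re.mp this).symm
  have h11 : A 1 1 = ((A 1 1).re : ℂ) := by
    have := h.1.apply 1 1
    exact (Complex.conj_eq_iff_re.mp this).symm
  set a0 := (A 0 0).re
  set a1 := (A 1 1).re
  set c := A 0 1
  have ha0 : 0 ≤ a0 := by
    have := h.dotProduct_mulVec_nonneg ![1, 0]
    rw [form2] at this
    simp only [Matrix.cons_val_zero, Matrix.cons_val_one, Matrix.head_cons] at this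
    rw [h00] at this
    simpa [Complex.zero_le_real] using this
  have ha1 : 0 ≤ a1 := by
    have := h.dotProduct_mulVec_nonneg ![0, 1]
    rw [form2] at this
    simp only [Matrix.cons_val_zero, Matrix.cons_val_one, Matrix.head_cons] at this
    rw [h11] at this
    simpa [Complex.zero_le_real] using this
  refine ⟨h00, h11, h10, ha0, ha1, ?_⟩
  have hq : ∀ t : ℝ, 0 ≤ a0 * t ^ 2 - 2 * Complex.normSq c * t + a1 * Complex.normSq c := by
    intro t
    have := h.dotProduct_mulVec_nonneg ![(t : ℂ), -(starRingEnd ℂ) c]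
    rw [form2] at this
    simp only [Matrix.cons_val_zero, Matrix.cons_val_one, Matrix.head_cons] at this
    rw [h00, h11, h10] at this
    have heq : (starRingEnd ℂ) (t : ℂ) * (((a0 : ℝ) : ℂ) * (t : ℂ) + c * -(starRingEnd ℂ) c)
        + (starRingEnd ℂ) (-(starRingEnd ℂ) c) * ((starRingEnd ℂ) c * (t : ℂ) + ((a1 : ℝ) : ℂ) * -(starRingEnd ℂ) c)
        = ((a0 * t ^ 2 - 2 * Complex.normSq c * t + a1 * Complex.normSq c : ℝ) : ℂ) := by
      simp only [Complex.ext_iff, Complex.add_re, Complex.add_im, Complex.mul_re, Complex.mul_im,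
        Complex.normSq_apply, Complex.ofReal_re, Complex.ofReal_im, Complex.conj_re,
        Complex.conj_im, Complex.neg_re, Complex.neg_im, Complex.sub_re, Complex.sub_im]
      constructor <;> ring
    rw [heq, Complex.zero_le_real] at this
    exact this
  rcases eq_or_lt_of_le (Complex.normSq_nonneg c) with hc0 | hc0
  · rw [← hc0]; exact mul_nonneg ha0 ha1
  rcases eq_or_lt_of_le ha0 with ha0' | ha0'
  · exfalso
    have := hq ((a1 + 1) / 2)
    rw [← ha0'] at this
    nlinarith
  · have h3 := hq (Complex.normSq c / a0)
    rw [div_pow] at h3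
    have e1 : a0 * (Complex.normSq c ^ 2 / a0 ^ 2) = Complex.normSq c ^ 2 / a0 := by
      field_simp
    have e2 : 2 * Complex.normSq c * (Complex.normSq c / a0) = 2 * (Complex.normSq c ^ 2 / a0) := by
      field_simp
    rw [e1, e2] at h3
    have h4 : Complex.normSq c ^ 2 / a0 ≤ a1 * Complex.normSq c := by linarith
    rw [div_le_iff₀ ha0'] at h4
    nlinarith

def ptrL (M : M4) : M2 := Matrix.of fun i k => ∑ j, M (i, j) (k, j)
def ptrR (M : M4) : M2 := Matrix.of fun j l => ∑ i, M (i, j) (i, l)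
def trSwap (M : M4) : ℂ := ∑ i, ∑ j, M (j, i) (i, j)

def jmap (a b : ℝ) : M4 →ₗ[ℂ] M2 where
  toFun M := ((((1 - a - b - a*b)/4 : ℝ) : ℂ) * M.trace + ((a*b/2 : ℝ) : ℂ) * trSwap M) • (1 : M2)
    + ((a/2 : ℝ) : ℂ) • ptrL M + ((b/2 : ℝ) : ℂ) • ptrR M
  map_add' M N := by
    ext i j
    simp [ptrL, ptrR, trSwap, Matrix.trace, Matrix.diag, Finset.sum_add_distrib,
      Matrix.add_apply, Matrix.one_apply, mul_add, Fintype.sum_prod_type, Fin.sum_univ_two]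
    split_ifs <;> ring
  map_smul' r M := by
    ext i j
    simp [ptrL, ptrR, trSwap, Matrix.trace, Matrix.diag, Finset.mul_sum,
      Matrix.smul_apply, Matrix.one_apply, smul_eq_mul, Fintype.sum_prod_type, Fin.sum_univ_two]
    split_ifs <;> ring

lemma ptrL_kron (A B : M2) : ptrL (A ⊗ₖ B) = B.trace • A := by
  ext i k
  simp [ptrL, Matrix.trace, Matrix.diag, Matrix.smul_apply, smul_eq_mul, Finset.sum_mul,
    Fin.sum_univ_two]
  ring

lemma ptrR_kron (A B : M2) : ptrR (A ⊗ₖ B) = A.trace • B := by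
  ext j l
  simp [ptrR, Matrix.trace, Matrix.diag, Matrix.smul_apply, smul_eq_mul, Finset.sum_mul,
    Fin.sum_univ_two]
  ring

lemma trSwap_kron (A B : M2) : trSwap (A ⊗ₖ B) = (A * B).trace := by
  simp only [trSwap, Matrix.kroneckerMap_apply, Matrix.trace, Matrix.diag, Matrix.mul_apply,
    Fin.sum_univ_two]
  ring

lemma jmap_apply (a b : ℝ) (M : M4) : jmap a b M
    = ((((1 - a - b - a*b)/4 : ℝ) : ℂ) * M.trace + ((a*b/2 : ℝ) : ℂ) * trSwap M) • (1 : M2)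
    + ((a/2 : ℝ) : ℂ) • ptrL M + ((b/2 : ℝ) : ℂ) • ptrR M := rfl

lemma jmap_margin_left (a b : ℝ) (X : M2) : jmap a b (X ⊗ₖ (1 : M2)) = noisyId a X := by
  rw [jmap_apply, ptrL_kron, ptrR_kron, trSwap_kron, Matrix.trace_kronecker, mul_one,
    Matrix.trace_one, noisyId]
  match_scalars <;> (push_cast [Fintype.card_fin]; ring)

lemma jmap_margin_right (a b : ℝ) (Y : M2) : jmap a b ((1 : M2) ⊗ₖ Y) = noisyId b Y := by
  rw [jmap_apply, ptrL_kron, ptrR_kron, trSwap_kron, Matrix.trace_kronecker, one_mul,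
    Matrix.trace_one, noisyId]
  match_scalars <;> (push_cast [Fintype.card_fin]; ring)

lemma trAB_nonneg (a0 a1 c1 c2 b0 b1 d1 d2 : ℝ)
    (ha0 : 0 ≤ a0) (ha1 : 0 ≤ a1) (hdA : c1^2 + c2^2 ≤ a0 * a1)
    (hb0 : 0 ≤ b0) (hb1 : 0 ≤ b1) (hdB : d1^2 + d2^2 ≤ b0 * b1) :
    0 ≤ a0*b0 + a1*b1 + 2*(c1*d1 + c2*d2) := by
  have hu : 0 ≤ a0*b0 + a1*b1 := add_nonneg (mul_nonneg ha0 hb0) (mul_nonneg ha1 hb1)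
  rcases le_or_gt 0 (c1*d1 + c2*d2) with ht | ht
  · linarith
  · have hCS : (c1*d1 + c2*d2)^2 ≤ (c1^2 + c2^2) * (d1^2 + d2^2) := by
      nlinarith [sq_nonneg (c1*d2 - c2*d1)]
    have h2 : (c1*d1 + c2*d2)^2 ≤ a0 * a1 * (b0 * b1) := by
      nlinarith [sq_nonneg c1, sq_nonneg c2, sq_nonneg d1, sq_nonneg d2,
        mul_nonneg ha0 ha1, mul_nonneg hb0 hb1]
    nlinarith [hu, ht, h2, sq_nonneg (a0*b0 - a1*b1)]

lemma detkey (a b p q z w c1 c2 d1 d2 : ℝ)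
    (hab : a^2 + b^2 ≤ 1)
    (hX : c1^2 + c2^2 + z^2 ≤ p^2) (hY : d1^2 + d2^2 + w^2 ≤ q^2) :
    0 ≤ p^2 * q^2 + (a*b)^2 * (c1*d1 + c2*d2 + z*w)^2
      - a^2 * q^2 * (c1^2 + c2^2 + z^2) - b^2 * p^2 * (d1^2 + d2^2 + w^2) := by
  have h1 : a^2 * q^2 * (c1^2 + c2^2 + z^2) ≤ a^2 * q^2 * p^2 :=
    mul_le_mul_of_nonneg_left hX (by positivity)
  have h2 : b^2 * p^2 * (d1^2 + d2^2 + w^2) ≤ b^2 * p^2 * q^2 :=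
    mul_le_mul_of_nonneg_left hY (by positivity)
  have h3 : (a^2 + b^2) * (p^2 * q^2) ≤ 1 * (p^2 * q^2) :=
    mul_le_mul_of_nonneg_right hab (by positivity)
  nlinarith [sq_nonneg (a*b*(c1*d1 + c2*d2 + z*w))]

set_option maxHeartbeats 1000000 in
lemma jmap_psd (a b : ℝ) (ha : 0 ≤ a) (hb : 0 ≤ b) (hab : a^2 + b^2 ≤ 1)
    {A B : M2} (hA : A.PosSemidef) (hB : B.PosSemidef) :
    (jmap a b (A ⊗ₖ B)).PosSemidef := by
  obtain ⟨hA00, hA11, hA10, ha0, ha1, hdA⟩ := psd2_real hA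
  obtain ⟨hB00, hB11, hB10, hb0, hb1, hdB⟩ := psd2_real hB
  rw [Complex.normSq_apply] at hdA hdB
  set a0 := (A 0 0).re with ha0d
  set a1 := (A 1 1).re with ha1d
  set b0 := (B 0 0).re with hb0d
  set b1 := (B 1 1).re with hb1d
  set c1 := (A 0 1).re with hc1d
  set c2 := (A 0 1).im with hc2d
  set d1 := (B 0 1).re with hd1d
  set d2 := (B 0 1).im with hd2d
  have hdA' : c1^2 + c2^2 ≤ a0 * a1 := by nlinarith [hdA]
  have hdB' : d1^2 + d2^2 ≤ b0 * b1 := by nlinarith [hdB]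
  have hcA : A 0 1 = Complex.mk c1 c2 := rfl
  have hcB : B 0 1 = Complex.mk d1 d2 := rfl
  have htA : A.trace = ((a0 + a1 : ℝ) : ℂ) := by
    rw [Matrix.trace_fin_two, hA00, hA11]; push_cast; ring
  have htB : B.trace = ((b0 + b1 : ℝ) : ℂ) := by
    rw [Matrix.trace_fin_two, hB00, hB11]; push_cast; ring
  have htAB : (A * B).trace = ((a0*b0 + a1*b1 + 2*(c1*d1 + c2*d2) : ℝ) : ℂ) := by
    rw [Matrix.trace_fin_two, Matrix.mul_apply, Matrix.mul_apply]
    rw [Fin.sum_univ_two, Fin.sum_univ_two, hA00, hA11, hB00, hB11, hA10, hB10, hcA, hcB]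
    simp only [Complex.ext_iff, Complex.add_re, Complex.add_im, Complex.mul_re, Complex.mul_im,
      Complex.ofReal_re, Complex.ofReal_im, Complex.conj_re, Complex.conj_im]
    constructor <;> simp <;> ring
  obtain ⟨al, hald⟩ : ∃ x : ℝ, x = (1 - a - b - a*b)/4 * ((a0+a1)*(b0+b1))
      + a*b/2 * (a0*b0 + a1*b1 + 2*(c1*d1 + c2*d2)) := ⟨_, rfl⟩
  obtain ⟨be, hbed⟩ : ∃ x : ℝ, x = a/2 * (b0+b1) := ⟨_, rfl⟩
  obtain ⟨ga, hgad⟩ : ∃ x : ℝ, x = b/2 * (a0+a1) := ⟨_, rfl⟩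
  refine psd2 (r0 := al + be*a0 + ga*b0) (r1 := al + be*a1 + ga*b1)
    (c := ((be : ℝ) : ℂ) * A 0 1 + ((ga : ℝ) : ℂ) * B 0 1) _ ?_ ?_ ?_
  · -- matrix equality
    rw [jmap_apply, ptrL_kron, ptrR_kron, trSwap_kron, Matrix.trace_kronecker, htA, htB, htAB]
    ext i j
    fin_cases i <;> fin_cases j <;>
      simp only [Matrix.add_apply, Matrix.smul_apply, Matrix.one_apply, smul_eq_mul,
        Matrix.of_apply, Matrix.cons_val', Matrix.cons_val_zero, Matrix.cons_val_one,
        Matrix.head_cons, Matrix.empty_val', Matrix.cons_val_fin_one, Matrix.head_fin_const,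
        Fin.mk_zero, Fin.mk_one, Fin.zero_eta, Fin.one_eq_zero_iff, Fin.zero_eq_one_iff,
        Ne, OfNat.ofNat_ne_one, not_false_iff, one_ne_zero, ite_true, ite_false]
    · rw [hA00, hB00, hald, hbed, hgad]; push_cast; ring
    · rw [hbed, hgad]; push_cast; ring
    · rw [hA10, hB10, hbed, hgad]
      simp only [map_add, _root_.map_mul, Complex.conj_ofReal]
      push_cast; ring
    · rw [hA11, hB11, hald, hbed, hgad]; push_cast; ring
  · -- trace nonneg
    have htt := trAB_nonneg a0 a1 c1 c2 b0 b1 d1 d2 ha0 ha1 hdA' hb0 hb1 hdB'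
    have hS : 0 ≤ (a0+a1)*(b0+b1) := mul_nonneg (by linarith) (by linarith)
    have hab1 : a*b ≤ 1/2 := by nlinarith [sq_nonneg (a-b)]
    have h5 : 0 ≤ (1 - a*b) * ((a0+a1)*(b0+b1)) := mul_nonneg (by linarith) hS
    have h6 : 0 ≤ (a*b) * (a0*b0 + a1*b1 + 2*(c1*d1 + c2*d2)) :=
      mul_nonneg (mul_nonneg ha hb) htt
    have hid2 : (al + be*a0 + ga*b0) + (al + be*a1 + ga*b1)
        = (1 - a*b)/2 * ((a0+a1)*(b0+b1)) + (a*b) * (a0*b0 + a1*b1 + 2*(c1*d1 + c2*d2)) := by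
      rw [hald, hbed, hgad]; ring
    linarith [h5, h6, hid2]
  · -- det ineq
    have hns : Complex.normSq (((be : ℝ) : ℂ) * A 0 1 + ((ga : ℝ) : ℂ) * B 0 1)
        = (be*c1 + ga*d1)^2 + (be*c2 + ga*d2)^2 := by
      rw [hcA, hcB]
      simp only [Complex.normSq_apply, Complex.add_re, Complex.add_im, Complex.mul_re,
        Complex.mul_im, Complex.ofReal_re, Complex.ofReal_im]
      ring
    rw [hns]
    have hX : c1^2 + c2^2 + ((a0-a1)/2)^2 ≤ ((a0+a1)/2)^2 := by nlinarith [hdA']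
    have hY : d1^2 + d2^2 + ((b0-b1)/2)^2 ≤ ((b0+b1)/2)^2 := by nlinarith [hdB']
    have hkey := detkey a b ((a0+a1)/2) ((b0+b1)/2) ((a0-a1)/2) ((b0-b1)/2) c1 c2 d1 d2 hab hX hY
    have hid : (al + be*a0 + ga*b0) * (al + be*a1 + ga*b1)
          - ((be*c1 + ga*d1)^2 + (be*c2 + ga*d2)^2)
        = ((a0+a1)/2)^2 * ((b0+b1)/2)^2
          + (a*b)^2 * (c1*d1 + c2*d2 + ((a0-a1)/2)*((b0-b1)/2))^2
          - a^2 * ((b0+b1)/2)^2 * (c1^2 + c2^2 + ((a0-a1)/2)^2)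
          - b^2 * ((a0+a1)/2)^2 * (d1^2 + d2^2 + ((b0-b1)/2)^2) := by
      rw [hald, hbed, hgad]; ring
    linarith [hkey, hid]

lemma necessity (η₁ η₂ : ℝ) (Λ : M4 →ₗ[ℂ] M2)
    (hpos : ∀ A B : M2, A.PosSemidef → B.PosSemidef → (Λ (A ⊗ₖ B)).PosSemidef)
    (hm1 : ∀ X : M2, Λ (X ⊗ₖ (1 : M2)) = noisyId η₁ X)
    (hm2 : ∀ Y : M2, Λ ((1 : M2) ⊗ₖ Y) = noisyId η₂ Y) :
    η₁ ^ 2 + η₂ ^ 2 ≤ 1 := by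
  set u : ℂ := ((1/2 : ℝ) : ℂ) with hu
  set P1 : M2 := !![u, u; u, u] with hP1d
  set P2 : M2 := !![u, -u; -u, u] with hP2d
  set Q1 : M2 := !![u, -(u * Complex.I); u * Complex.I, u] with hQ1d
  set Q2 : M2 := !![u, u * Complex.I; -(u * Complex.I), u] with hQ2d
  have hcu : (starRingEnd ℂ) u = u := Complex.conj_ofReal _
  have hP1 : P1.PosSemidef := by
    refine psd2 (r0 := 1/2) (r1 := 1/2) (c := u) _ ?_ (by norm_num) ?_
    · rw [hcu]
    · rw [hu, Complex.normSq_ofReal]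
  have hP2 : P2.PosSemidef := by
    refine psd2 (r0 := 1/2) (r1 := 1/2) (c := -u) _ ?_ (by norm_num) ?_
    · rw [map_neg, hcu]
    · rw [hu, Complex.normSq_neg, Complex.normSq_ofReal]
  have hQ1 : Q1.PosSemidef := by
    refine psd2 (r0 := 1/2) (r1 := 1/2) (c := -(u * Complex.I)) _ ?_ (by norm_num) ?_
    · rw [map_neg, _root_.map_mul, hcu, Complex.conj_I]; rw [hQ1d]; ring_nf; rfl
    · rw [Complex.normSq_neg, Complex.normSq_mul, hu, Complex.normSq_ofReal, Complex.normSq_I]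
      norm_num
  have hQ2 : Q2.PosSemidef := by
    refine psd2 (r0 := 1/2) (r1 := 1/2) (c := u * Complex.I) _ ?_ (by norm_num) ?_
    · rw [_root_.map_mul, hcu, Complex.conj_I]; rw [hQ2d]; ring_nf; rfl
    · rw [Complex.normSq_mul, hu, Complex.normSq_ofReal, Complex.normSq_I]; norm_num
  have hQsum : Q1 + Q2 = 1 := by
    ext i j
    fin_cases i <;> fin_cases j <;>
      simp [hQ1d, hQ2d, hu, Matrix.one_apply] <;> norm_num
  have hPsum : P1 + P2 = 1 := by
    ext i j
    fin_cases i <;> fin_cases j <;>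
      simp [hP1d, hP2d, hu, Matrix.one_apply] <;> norm_num
  set K : M2 := Λ (P1 ⊗ₖ Q1) with hK
  have hA : K + Λ (P1 ⊗ₖ Q2) = noisyId η₁ P1 := by
    rw [hK, ← map_add, ← Matrix.kronecker_add, hQsum]; exact hm1 P1
  have hB : K + Λ (P2 ⊗ₖ Q1) = noisyId η₂ Q1 := by
    rw [hK, ← map_add, ← Matrix.add_kronecker, hPsum]; exact hm2 Q1
  have hD : Λ (P1 ⊗ₖ Q2) + Λ (P2 ⊗ₖ Q2) = noisyId η₂ Q2 := by
    rw [← map_add, ← Matrix.add_kronecker, hPsum]; exact hm2 Q2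
  have e2 : Λ (P1 ⊗ₖ Q2) = noisyId η₁ P1 - K := by rw [eq_sub_iff_add_eq, add_comm]; exact hA
  have e3 : Λ (P2 ⊗ₖ Q1) = noisyId η₂ Q1 - K := by rw [eq_sub_iff_add_eq, add_comm]; exact hB
  have e4 : Λ (P2 ⊗ₖ Q2) = noisyId η₂ Q2 - (noisyId η₁ P1 - K) := by
    rw [eq_sub_iff_add_eq, ← e2, add_comm]; exact hD
  have hAm : noisyId η₁ P1 = !![u, ((η₁/2 : ℝ) : ℂ); ((η₁/2 : ℝ) : ℂ), u] := by
    rw [noisyId, hP1d]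
    ext i j
    fin_cases i <;> fin_cases j <;>
      simp [Matrix.trace_fin_two, Matrix.add_apply, Matrix.smul_apply, Matrix.one_apply, hu] <;>
      push_cast <;> ring
  have hBm : noisyId η₂ Q1 = !![u, -(((η₂/2 : ℝ) : ℂ) * Complex.I);
      ((η₂/2 : ℝ) : ℂ) * Complex.I, u] := by
    rw [noisyId, hQ1d]
    ext i j
    fin_cases i <;> fin_cases j <;>
      simp [Matrix.trace_fin_two, Matrix.add_apply, Matrix.smul_apply, Matrix.one_apply, hu] <;>
      push_cast <;> ring
  have hDm : noisyId η₂ Q2 = !![u, ((η₂/2 : ℝ) : ℂ) * Complex.I;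
      -(((η₂/2 : ℝ) : ℂ) * Complex.I), u] := by
    rw [noisyId, hQ2d]
    ext i j
    fin_cases i <;> fin_cases j <;>
      simp [Matrix.trace_fin_two, Matrix.add_apply, Matrix.smul_apply, Matrix.one_apply, hu] <;>
      push_cast <;> ring
  set x1 : Fin 2 → ℂ := ![1, -((η₁ : ℂ) + (η₂ : ℂ) * Complex.I)] with hx1
  set x2 : Fin 2 → ℂ := ![1, -((η₁ : ℂ) - (η₂ : ℂ) * Complex.I)] with hx2
  set x3 : Fin 2 → ℂ := ![1, (η₁ : ℂ) - (η₂ : ℂ) * Complex.I] with hx3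
  set x4 : Fin 2 → ℂ := ![1, (η₁ : ℂ) + (η₂ : ℂ) * Complex.I] with hx4
  have h1 := (hpos P1 Q1 hP1 hQ1).dotProduct_mulVec_nonneg x1
  have h2 := (hpos P1 Q2 hP1 hQ2).dotProduct_mulVec_nonneg x2
  have h3 := (hpos P2 Q1 hP2 hQ1).dotProduct_mulVec_nonneg x3
  have h4 := (hpos P2 Q2 hP2 hQ2).dotProduct_mulVec_nonneg x4
  rw [← hK] at h1
  rw [e2] at h2
  rw [e3] at h3
  rw [e4] at h4
  have hsum := add_nonneg (add_nonneg (add_nonneg h1 h2) h3) h4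
  have hval : dotProduct (star x1) (K *ᵥ x1)
      + dotProduct (star x2) ((noisyId η₁ P1 - K) *ᵥ x2)
      + dotProduct (star x3) ((noisyId η₂ Q1 - K) *ᵥ x3)
      + dotProduct (star x4) ((noisyId η₂ Q2 - (noisyId η₁ P1 - K)) *ᵥ x4)
      = ((1 - η₁^2 - η₂^2 : ℝ) : ℂ) := by
    rw [hAm, hBm, hDm, form2, form2, form2, form2]
    simp only [hx1, hx2, hx3, hx4, Matrix.cons_val_zero, Matrix.cons_val_one, Matrix.head_cons,
      Matrix.sub_apply, Matrix.cons_val', Matrix.empty_val', Matrix.cons_val_fin_one,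
      Matrix.head_fin_const, Matrix.of_apply, hu]
    simp only [Complex.ext_iff, Complex.add_re, Complex.add_im, Complex.sub_re, Complex.sub_im,
      Complex.neg_re, Complex.neg_im, Complex.mul_re, Complex.mul_im, Complex.one_re,
      Complex.one_im, Complex.ofReal_re, Complex.ofReal_im, Complex.I_re, Complex.I_im,
      Complex.conj_re, Complex.conj_im]
    constructor <;> ring
  rw [hval] at hsum
  rw [Complex.zero_le_real] at hsum
  linarith


/-- the pair of noisy identity qubit channels `(Λ_{η₁}, Λ_{η₂})` is
min-tensor-compatible (a joint map exists) iff `η₁² + η₂² ≤ 1`. -/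
theorem min_tensor_compatible_iff (η₁ η₂ : ℝ)
    (h₁ : 0 ≤ η₁) (h₁' : η₁ ≤ 1) (h₂ : 0 ≤ η₂) (h₂' : η₂ ≤ 1) :
    (∃ Λ : M4 →ₗ[ℂ] M2, IsJointMap η₁ η₂ Λ) ↔ η₁ ^ 2 + η₂ ^ 2 ≤ 1 := by
  constructor
  · rintro ⟨Λ, hpos, hma, hmb⟩
    exact necessity η₁ η₂ Λ hpos hma hmb
  · intro hle
    refine ⟨jmap η₁ η₂, ?_, ?_, ?_⟩
    · intro A B hA hB
      exact jmap_psd η₁ η₂ h₁ h₂ (by nlinarith) hA hB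
    · exact jmap_margin_left η₁ η₂
    · exact jmap_margin_right η₁ η₂
end
end

section
/- Let 0 ≤ η₁, η₂ ≤ 1 with η₁² + η₂² = 1, and let Λ be a joint map for the pair of noisy identity qubit channels (Λ_{η₁}, Λ_{η₂}). Then for all unit vectors e, d ∈ ℝ³ with e·d = 0, one has Λ( (e·σ) ⊗ (d·σ) ) = 0. -/
open Matrix Kronecker
open scoped ComplexOrder

noncomputable section

/-- Pauli matrices. -/
def pauli1 : M2 := !![0, 1; 1, 0]
def pauli2 : M2 := !![0, -Complex.I; Complex.I, 0]
def pauli3 : M2 := !![1, 0; 0, -1]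

/-- `n · σ = n₁σ₁ + n₂σ₂ + n₃σ₃` for a real vector `n ∈ ℝ³`. -/
def dotSigma (n : Fin 3 → ℝ) : M2 :=
  (n 0 : ℂ) • pauli1 + (n 1 : ℂ) • pauli2 + (n 2 : ℂ) • pauli3

/-!
Write `T = Λ((e·σ) ⊗ (d·σ))`. Since `η₁ e ± η₂ d` are unit vectors, the margins turn the
positive products `(1 ± e·σ) ⊗ (1 ± d·σ)` into the positive matrices `1 + (±η₁ e ± η₂ d)·σ ± T`;
in particular `T` is Hermitian, `T = τ₀ + τ·σ` with `τ₀ ∈ ℝ`, `τ ∈ ℝ³`. A Hermitian `2 × 2` matrix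
is positive iff its trace and determinant are, so `c + w·σ ≥ 0` iff `|w| ≤ c`. Pairing each sign
choice with its opposite, the parallelogram law gives `1 + |τ|² ≤ (1 ± τ₀)²`, and multiplying the two
bounds, `(1 + |τ|²)² ≤ (1 - τ₀²)² ≤ 1`, which forces `τ = 0` and `τ₀ = 0`.
-/

theorem Matrix.IsHermitian.posSemidef_iff_trace_nonneg_and_det_nonneg {𝕜 : Type*} [RCLike 𝕜]
    {A : Matrix (Fin 2) (Fin 2) 𝕜} (hA : A.IsHermitian) :
    A.PosSemidef ↔ 0 ≤ A.trace ∧ 0 ≤ A.det := by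
  refine ⟨fun h => ⟨h.trace_nonneg, h.det_nonneg⟩, fun ⟨htr, hdet⟩ => ?_⟩
  rw [hA.trace_eq_sum_eigenvalues, Fin.sum_univ_two] at htr
  rw [hA.det_eq_prod_eigenvalues, Fin.prod_univ_two] at hdet
  norm_cast at htr hdet
  rw [hA.posSemidef_iff_eigenvalues_nonneg, Pi.le_def]
  intro i
  fin_cases i
  · show 0 ≤ hA.eigenvalues 0
    nlinarith
  · show 0 ≤ hA.eigenvalues 1
    nlinarith

theorem Matrix.neg_kronecker {R m n p q : Type*} [Mul R] [HasDistribNeg R]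
    (A : Matrix m n R) (B : Matrix p q R) : (-A) ⊗ₖ B = -(A ⊗ₖ B) := by
  ext; simp [kroneckerMap_apply]

theorem Matrix.kronecker_neg {R m n p q : Type*} [Mul R] [HasDistribNeg R]
    (A : Matrix m n R) (B : Matrix p q R) : A ⊗ₖ (-B) = -(A ⊗ₖ B) := by
  ext; simp [kroneckerMap_apply]

lemma dotSigma_add (n m : Fin 3 → ℝ) : dotSigma (n + m) = dotSigma n + dotSigma m := by
  simp only [dotSigma, Pi.add_apply, Complex.ofReal_add, add_smul]
  abel

lemma dotSigma_smul (r : ℝ) (n : Fin 3 → ℝ) : dotSigma (r • n) = (r : ℂ) • dotSigma n := by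
  simp only [dotSigma, Pi.smul_apply, smul_eq_mul, Complex.ofReal_mul, mul_smul, smul_add]

lemma dotSigma_neg (n : Fin 3 → ℝ) : dotSigma (-n) = -dotSigma n := by
  simpa using dotSigma_smul (-1) n

lemma trace_dotSigma (n : Fin 3 → ℝ) : (dotSigma n).trace = 0 := by
  simp [dotSigma, pauli1, pauli2, pauli3, Matrix.trace_fin_two]

lemma isHermitian_dotSigma (n : Fin 3 → ℝ) : (dotSigma n).IsHermitian := by
  ext i j
  fin_cases i <;> fin_cases j <;> simp [dotSigma, pauli1, pauli2, pauli3]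

lemma isHermitian_smul_one_add_dotSigma (c : ℝ) (n : Fin 3 → ℝ) :
    ((c : ℂ) • 1 + dotSigma n).IsHermitian :=
  (isHermitian_one.smul (Complex.conj_ofReal c)).add (isHermitian_dotSigma n)

lemma det_smul_one_add_dotSigma (c : ℝ) (n : Fin 3 → ℝ) :
    ((c : ℂ) • 1 + dotSigma n).det = ((c ^ 2 - n ⬝ᵥ n : ℝ) : ℂ) := by
  simp [Matrix.det_fin_two, dotSigma, pauli1, pauli2, pauli3, dotProduct, Fin.sum_univ_three]
  linear_combination (n 1 : ℂ) ^ 2 * Complex.I_sq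

lemma posSemidef_smul_one_add_dotSigma_iff (c : ℝ) (n : Fin 3 → ℝ) :
    ((c : ℂ) • 1 + dotSigma n).PosSemidef ↔ 0 ≤ c ∧ n ⬝ᵥ n ≤ c ^ 2 := by
  rw [(isHermitian_smul_one_add_dotSigma c n).posSemidef_iff_trace_nonneg_and_det_nonneg,
    det_smul_one_add_dotSigma, trace_add, trace_dotSigma, trace_smul, trace_one]
  simp only [Fintype.card_fin, smul_eq_mul, add_zero, Complex.zero_le_real, sub_nonneg]
  norm_cast
  constructor <;> rintro ⟨h, h'⟩ <;> exact ⟨by linarith, h'⟩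

lemma posSemidef_one_add_dotSigma {n : Fin 3 → ℝ} (hn : n ⬝ᵥ n ≤ 1) :
    (1 + dotSigma n).PosSemidef := by
  simpa using (posSemidef_smul_one_add_dotSigma_iff 1 n).2 ⟨zero_le_one, by simpa using hn⟩

lemma Matrix.IsHermitian.exists_eq_smul_one_add_dotSigma {T : M2} (hT : T.IsHermitian) :
    ∃ (c : ℝ) (n : Fin 3 → ℝ), T = (c : ℂ) • 1 + dotSigma n := by
  refine ⟨((T 0 0).re + (T 1 1).re) / 2,
    ![(T 1 0).re, (T 1 0).im, ((T 0 0).re - (T 1 1).re) / 2], ?_⟩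
  have h00 : (T 0 0).im = 0 := Complex.conj_eq_iff_im.mp (hT.apply 0 0)
  have h11 : (T 1 1).im = 0 := Complex.conj_eq_iff_im.mp (hT.apply 1 1)
  have h01 : T 0 1 = star (T 1 0) := (hT.apply 0 1).symm
  ext i j
  fin_cases i <;> fin_cases j <;> apply Complex.ext <;>
    simp [dotSigma, pauli1, pauli2, pauli3, h00, h11, h01] <;> ring

lemma noisyId_one (η : ℝ) : noisyId η 1 = 1 := by
  rw [noisyId, trace_one, Fintype.card_fin, smul_smul, ← add_smul]
  convert one_smul ℂ (1 : M2)
  push_cast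
  ring

lemma noisyId_of_trace_eq_zero (η : ℝ) {A : M2} (hA : A.trace = 0) :
    noisyId η A = (η : ℂ) • A := by
  simp [noisyId, hA]

lemma noisyId_dotSigma (η : ℝ) (n : Fin 3 → ℝ) : noisyId η (dotSigma n) = dotSigma (η • n) := by
  rw [noisyId_of_trace_eq_zero η (trace_dotSigma n), dotSigma_smul]

namespace IsJointMap

variable {η₁ η₂ : ℝ} {Λ : M4 →ₗ[ℂ] M2}

lemma apply_one_add_kronecker_one_add (hΛ : IsJointMap η₁ η₂ Λ) (a b : Fin 3 → ℝ) :
    Λ ((1 + dotSigma a) ⊗ₖ (1 + dotSigma b)) =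
      1 + dotSigma (η₁ • a + η₂ • b) + Λ (dotSigma a ⊗ₖ dotSigma b) := by
  rw [add_kronecker, kronecker_add, kronecker_add, map_add, map_add, map_add, hΛ.2.1, hΛ.2.1,
    hΛ.2.2, noisyId_one, noisyId_dotSigma, noisyId_dotSigma, dotSigma_add]
  abel

lemma posSemidef_one_add_dotSigma_add_apply (hΛ : IsJointMap η₁ η₂ Λ) {a b : Fin 3 → ℝ}
    (ha : a ⬝ᵥ a ≤ 1) (hb : b ⬝ᵥ b ≤ 1) :
    (1 + dotSigma (η₁ • a + η₂ • b) + Λ (dotSigma a ⊗ₖ dotSigma b)).PosSemidef := by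
  rw [← hΛ.apply_one_add_kronecker_one_add]
  exact hΛ.1 _ _ (posSemidef_one_add_dotSigma ha) (posSemidef_one_add_dotSigma hb)

lemma isHermitian_apply_dotSigma_kronecker_dotSigma (hΛ : IsJointMap η₁ η₂ Λ)
    {a b : Fin 3 → ℝ} (ha : a ⬝ᵥ a ≤ 1) (hb : b ⬝ᵥ b ≤ 1) :
    (Λ (dotSigma a ⊗ₖ dotSigma b)).IsHermitian := by
  have h := (hΛ.posSemidef_one_add_dotSigma_add_apply ha hb).isHermitian.sub
    (isHermitian_one.add (isHermitian_dotSigma (η₁ • a + η₂ • b)))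
  rwa [add_sub_cancel_left] at h

lemma one_add_dotProduct_self_le (hΛ : IsJointMap η₁ η₂ Λ) (hη : η₁ ^ 2 + η₂ ^ 2 = 1)
    {a b τ : Fin 3 → ℝ} {τ₀ : ℝ} (ha : a ⬝ᵥ a = 1) (hb : b ⬝ᵥ b = 1) (hab : a ⬝ᵥ b = 0)
    (hT : Λ (dotSigma a ⊗ₖ dotSigma b) = (τ₀ : ℂ) • 1 + dotSigma τ) :
    0 ≤ 1 + τ₀ ∧ 1 + τ ⬝ᵥ τ ≤ (1 + τ₀) ^ 2 := by
  have hbloch : ∀ v : Fin 3 → ℝ, 1 + dotSigma v + ((τ₀ : ℂ) • 1 + dotSigma τ) =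
      ((1 + τ₀ : ℝ) : ℂ) • 1 + dotSigma (v + τ) := fun v => by
    rw [dotSigma_add]
    push_cast
    module
  have hplus := hΛ.posSemidef_one_add_dotSigma_add_apply ha.le hb.le
  have hminus := hΛ.posSemidef_one_add_dotSigma_add_apply (a := -a) (b := -b)
    (by simpa using ha.le) (by simpa using hb.le)
  rw [dotSigma_neg, dotSigma_neg, neg_kronecker, kronecker_neg, neg_neg, smul_neg, smul_neg,
    ← neg_add] at hminus
  rw [hT, hbloch, posSemidef_smul_one_add_dotSigma_iff] at hplus hminus
  set u := η₁ • a + η₂ • b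
  have hu : u ⬝ᵥ u = 1 := by
    simp only [u, add_dotProduct, dotProduct_add, smul_dotProduct, dotProduct_smul, smul_eq_mul,
      dotProduct_comm b a, ha, hb, hab]
    linear_combination hη
  have hparallelogram :
      (u + τ) ⬝ᵥ (u + τ) + (-u + τ) ⬝ᵥ (-u + τ) = 2 * (u ⬝ᵥ u) + 2 * (τ ⬝ᵥ τ) := by
    simp only [add_dotProduct, dotProduct_add, neg_dotProduct, dotProduct_neg,
      dotProduct_comm τ u]
    ring
  exact ⟨hplus.1, by linarith [hplus.2, hminus.2]⟩

end IsJointMap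

theorem joint_map_orthogonal_vanishes_general (η₁ η₂ : ℝ)
    (hcirc : η₁ ^ 2 + η₂ ^ 2 = 1)
    (Λ : M4 →ₗ[ℂ] M2) (hΛ : IsJointMap η₁ η₂ Λ)
    (e d : Fin 3 → ℝ) (he : (∑ i, e i ^ 2) = 1) (hd : (∑ i, d i ^ 2) = 1)
    (hed : (∑ i, e i * d i) = 0) :
    Λ (dotSigma e ⊗ₖ dotSigma d) = 0 := by
  replace he : e ⬝ᵥ e = 1 := by simpa [dotProduct, sq] using he
  replace hd : d ⬝ᵥ d = 1 := by simpa [dotProduct, sq] using hd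
  replace hed : e ⬝ᵥ d = 0 := hed
  obtain ⟨τ₀, τ, hT⟩ :=
    (hΛ.isHermitian_apply_dotSigma_kronecker_dotSigma he.le hd.le).exists_eq_smul_one_add_dotSigma
  have hT' : Λ (dotSigma e ⊗ₖ dotSigma (-d)) = ((-τ₀ : ℝ) : ℂ) • 1 + dotSigma (-τ) := by
    rw [dotSigma_neg, kronecker_neg, map_neg, hT, dotSigma_neg]
    push_cast
    module
  obtain ⟨hplus, hle⟩ := hΛ.one_add_dotProduct_self_le hcirc he hd hed hT
  obtain ⟨hminus, hle'⟩ := hΛ.one_add_dotProduct_self_le hcirc he (by simpa using hd)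
    (by simpa using hed) hT'
  rw [neg_dotProduct, dotProduct_neg, neg_neg] at hle'
  have hτ_nonneg : 0 ≤ τ ⬝ᵥ τ := by simpa using dotProduct_self_star_nonneg τ
  have hτ : τ ⬝ᵥ τ = 0 := by nlinarith
  have hτ₀ : τ₀ = 0 := by nlinarith
  rw [hT, hτ₀, dotProduct_self_eq_zero.mp hτ]
  simp [dotSigma]

/-- for `η₁² + η₂² = 1` and a joint map `Λ` of `(Λ_{η₁}, Λ_{η₂})`,
one has `Λ((e·σ) ⊗ (d·σ)) = 0` for all orthogonal unit vectors `e, d ∈ ℝ³`. -/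
theorem joint_map_orthogonal_vanishes (η₁ η₂ : ℝ)
    (h₁ : 0 ≤ η₁) (h₁' : η₁ ≤ 1) (h₂ : 0 ≤ η₂) (h₂' : η₂ ≤ 1)
    (hcirc : η₁ ^ 2 + η₂ ^ 2 = 1)
    (Λ : M4 →ₗ[ℂ] M2) (hΛ : IsJointMap η₁ η₂ Λ)
    (e d : Fin 3 → ℝ) (he : (∑ i, e i ^ 2) = 1) (hd : (∑ i, d i ^ 2) = 1)
    (hed : (∑ i, e i * d i) = 0) :
    Λ (dotSigma e ⊗ₖ dotSigma d) = 0 :=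
  joint_map_orthogonal_vanishes_general η₁ η₂ hcirc Λ hΛ e d he hd hed
end
end

section
/- Let E₁, …, E_N be self-adjoint d×d complex matrices satisfying the anticommutation relations E_n E_m + E_m E_n = 2δ_{nm}·I for all n, m. Then for every density matrix ρ (positive semidefinite d×d matrix with trace 1), Σ_{n=1}^N (tr(ρ E_n))² ≤ 1. -/
/-! With `cₙ = re tr(ρ Eₙ)` and `F = ∑ cₙ Eₙ`, the anticommutation relations give `F² = s • 1`
for `s = ∑ cₙ²`, while `re tr(ρ F) = s`. The variance of the Hermitian matrix `F` in the state `ρ`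
is nonnegative, `(re tr(ρ F))² ≤ re tr(ρ F²)`, that is `s² ≤ s`, hence `s ≤ 1`. -/

open Matrix
open scoped ComplexOrder

theorem sum_smul_mul_self_of_anticomm {K A ι : Type*} [Field K] [NeZero (2 : K)] [Ring A]
    [Algebra K A] [Fintype ι] [DecidableEq ι] (E : ι → A)
    (hE : ∀ n m, E n * E m + E m * E n = if n = m then (2 : K) • (1 : A) else 0) (c : ι → K) :
    (∑ n, c n • E n) * (∑ n, c n • E n) = (∑ n, c n ^ 2) • (1 : A) := by
  set X := ∑ n, c n • E n
  have hX : X * X = ∑ n, ∑ m, (c n * c m) • (E n * E m) := by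
    simp only [X, Finset.sum_mul_sum, smul_mul_smul_comm]
  have hX_swap : X * X = ∑ n, ∑ m, (c n * c m) • (E m * E n) := by
    rw [hX, Finset.sum_comm]
    exact Finset.sum_congr rfl fun n _ => Finset.sum_congr rfl fun m _ => by rw [mul_comm]
  have h2 : (2 : K) • (X * X) = (2 : K) • ((∑ n, c n ^ 2) • (1 : A)) := calc
    (2 : K) • (X * X) = ∑ n, ∑ m, (c n * c m) • (E n * E m + E m * E n) := by
      rw [two_smul]
      nth_rewrite 1 [hX]
      rw [hX_swap, ← Finset.sum_add_distrib]
      simp only [← Finset.sum_add_distrib, smul_add]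
    _ = (2 : K) • ((∑ n, c n ^ 2) • (1 : A)) := by
      simp only [hE, smul_ite, smul_zero, Finset.sum_ite_eq, Finset.mem_univ, if_true,
        smul_smul, ← Finset.sum_smul, ← Finset.sum_mul, sq, mul_comm (2 : K)]
  exact smul_right_injective A two_ne_zero h2

theorem Matrix.PosSemidef.trace_mul_conjTranspose_mul_self_nonneg {n 𝕜 : Type*} [Fintype n]
    [RCLike 𝕜] {ρ : Matrix n n 𝕜} (hρ : ρ.PosSemidef) (B : Matrix n n 𝕜) :
    0 ≤ (ρ * (Bᴴ * B)).trace := by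
  rw [← Matrix.mul_assoc, trace_mul_comm]
  simpa only [Matrix.mul_assoc] using (hρ.mul_mul_conjTranspose_same B).trace_nonneg

theorem Matrix.PosSemidef.re_trace_mul_sq_le {n 𝕜 : Type*} [Fintype n] [DecidableEq n]
    [RCLike 𝕜] {ρ A : Matrix n n 𝕜} (hρ : ρ.PosSemidef) (htr : ρ.trace = 1)
    (hA : A.IsHermitian) :
    RCLike.re (ρ * A).trace ^ 2 ≤ RCLike.re (ρ * (A * A)).trace := by
  set t := RCLike.re (ρ * A).trace
  set B := A - (t : 𝕜) • 1
  have hB : Bᴴ = B := by simp [B, hA.eq]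
  have hvar : RCLike.re (ρ * (B * B)).trace = RCLike.re (ρ * (A * A)).trace - t ^ 2 := by
    simp [B, sub_mul, mul_sub, trace_sub, trace_smul, htr, RCLike.smul_re, t]
    ring
  have hnonneg := RCLike.nonneg_iff.mp (hρ.trace_mul_conjTranspose_mul_self_nonneg B) |>.1
  rw [hB, hvar] at hnonneg
  linarith

theorem clifford_trace_sq_sum_bound_general (d N : ℕ)
    (E : Fin N → Matrix (Fin d) (Fin d) ℂ)
    (hsa : ∀ n, (E n).IsHermitian)
    (hanti : ∀ n m, E n * E m + E m * E n =
      if n = m then (2 : ℂ) • (1 : Matrix (Fin d) (Fin d) ℂ) else 0)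
    (ρ : Matrix (Fin d) (Fin d) ℂ) (hρ : ρ.PosSemidef) (htr : ρ.trace = 1) :
    (∑ n, ((ρ * E n).trace.re) ^ 2) ≤ 1 := by
  set c : Fin N → ℝ := fun n => (ρ * E n).trace.re
  set s := ∑ n, c n ^ 2
  set F := ∑ n, (c n : ℂ) • E n
  have hF : F.IsHermitian :=
    isSelfAdjoint_sum _ fun n _ => (hsa n).smul (Complex.conj_ofReal (c n))
  have hFF : F * F = (s : ℂ) • 1 := by
    rw [sum_smul_mul_self_of_anticomm E hanti]
    simp [s]
  have htrF : (ρ * F).trace.re = s := by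
    simp [F, s, c, Matrix.mul_sum, trace_sum, sq]
  have htrFF : (ρ * (F * F)).trace.re = s := by
    simp [hFF, htr]
  have hvar := hρ.re_trace_mul_sq_le htr hF
  simp only [RCLike.re_to_complex, htrF, htrFF] at hvar
  have hs : 0 ≤ s := Finset.sum_nonneg fun n _ => sq_nonneg (c n)
  nlinarith

/-- Lemma 1, second part: for self-adjoint matrices `E₁, …, E_N` satisfying
the Clifford anticommutation relations `EₙEₘ + EₘEₙ = 2δₙₘ I` and any density matrix `ρ`,
one has `Σₙ (tr(ρ Eₙ))² ≤ 1`. -/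
theorem clifford_trace_sq_sum_bound (d N : ℕ) (hd : 1 ≤ d)
    (E : Fin N → Matrix (Fin d) (Fin d) ℂ)
    (hsa : ∀ n, (E n).IsHermitian)
    (hanti : ∀ n m, E n * E m + E m * E n =
      if n = m then (2 : ℂ) • (1 : Matrix (Fin d) (Fin d) ℂ) else 0)
    (ρ : Matrix (Fin d) (Fin d) ℂ) (hρ : ρ.PosSemidef) (htr : ρ.trace = 1) :
    (∑ n, ((ρ * E n).trace.re) ^ 2) ≤ 1 :=
  clifford_trace_sq_sum_bound_general d N E hsa hanti ρ hρ htr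
end

section
/- Let 0 ≤ η₁, η₂ ≤ 1 with η₁² + η₂² ≤ 1. Then there exists a joint map for the pair of noisy identity qubit channels (Λ_{η₁}, Λ_{η₂}), i.e., a linear map Λ : M₂⊗M₂ → M₂ with Λ(A⊗B) positive semidefinite for all positive semidefinite 2×2 matrices A, B, Λ(X⊗I) = Λ_{η₁}(X), and Λ(I⊗Y) = Λ_{η₂}(Y) for all 2×2 matrices X, Y. -/
set_option maxHeartbeats 1000000


open Matrix Kronecker
open scoped ComplexOrder

noncomputable section

/-! Auxiliary lemmas -/

lemma det_nn {A : M2} (hA : A.PosSemidef) : 0 ≤ A.det := by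
  rw [hA.1.det_eq_prod_eigenvalues]
  exact Finset.prod_nonneg fun i _ =>
    RCLike.ofReal_nonneg.mpr (hA.eigenvalues_nonneg i)

lemma psd_entries {A : M2} (hA : A.PosSemidef) :
    0 ≤ (A 0 0).re ∧ 0 ≤ (A 1 1).re ∧ A 0 0 = ((A 0 0).re : ℂ) ∧
      A 1 1 = ((A 1 1).re : ℂ) ∧ A 1 0 = (starRingEnd ℂ) (A 0 1) ∧
      Complex.normSq (A 0 1) ≤ (A 0 0).re * (A 1 1).re := by
  have h00 := hA.dotProduct_mulVec_nonneg (Pi.single 0 1)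
  have h11 := hA.dotProduct_mulVec_nonneg (Pi.single 1 1)
  simp [dotProduct, mulVec, Fin.sum_univ_two, Pi.single_apply] at h00 h11
  rw [Complex.le_def] at h00 h11
  simp at h00 h11
  have hA00 : A 0 0 = ((A 0 0).re : ℂ) := by
    apply Complex.ext <;> simp [h00.2.symm]
  have hA11 : A 1 1 = ((A 1 1).re : ℂ) := by
    apply Complex.ext <;> simp [h11.2.symm]
  have h10 : A 1 0 = (starRingEnd ℂ) (A 0 1) := (hA.1.apply 1 0).symm
  have hdet := det_nn hA
  have e : A.det = (((A 0 0).re * (A 1 1).re - Complex.normSq (A 0 1) : ℝ) : ℂ) := by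
    rw [det_fin_two, h10, Complex.mul_conj, hA00, hA11]
    push_cast
    simp [Complex.ofReal_re]
  rw [e, Complex.zero_le_real] at hdet
  exact ⟨h00.1, h11.1, hA00, hA11, h10, by linarith⟩

lemma psd2_s14 (x y : ℝ) (U : ℂ) (hx : 0 ≤ x) (hy : 0 ≤ y)
    (hU : Complex.normSq U ≤ x * y) :
    (!![(x : ℂ), U; (starRingEnd ℂ) U, (y : ℂ)]).PosSemidef := by
  rw [posSemidef_iff_dotProduct_mulVec]
  constructor
  · ext i j
    fin_cases i <;> fin_cases j <;>
      simp [conjTranspose_apply, Complex.conj_ofReal]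
  · intro v
    have key : (starRingEnd ℂ) (v 0) * ((x : ℂ) * v 0 + U * v 1)
        + (starRingEnd ℂ) (v 1) * ((starRingEnd ℂ) U * v 0 + (y : ℂ) * v 1)
        = ((x * Complex.normSq (v 0) + y * Complex.normSq (v 1)
            + 2 * ((starRingEnd ℂ) (v 0) * U * v 1).re : ℝ) : ℂ) := by
      apply Complex.ext <;>
        simp [Complex.normSq_apply, Complex.mul_re, Complex.mul_im,
          Complex.add_re, Complex.add_im] <;> ring
    have habs : |((starRingEnd ℂ) (v 0) * U * v 1).re|
        ≤ ‖v 0‖ * ‖U‖ * ‖v 1‖ := by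
      calc |((starRingEnd ℂ) (v 0) * U * v 1).re|
          ≤ ‖(starRingEnd ℂ) (v 0) * U * v 1‖ := Complex.abs_re_le_norm _
      _ = ‖v 0‖ * ‖U‖ * ‖v 1‖ := by
        rw [norm_mul, norm_mul, Complex.norm_conj]
    have h2 : Complex.normSq (v 0) = ‖v 0‖ ^ 2 := (Complex.sq_norm _).symm
    have h3 : Complex.normSq (v 1) = ‖v 1‖ ^ 2 := (Complex.sq_norm _).symm
    have h4 : ‖U‖ ^ 2 ≤ x * y := by rw [Complex.sq_norm]; exact hU
    have ha := norm_nonneg (v 0)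
    have hb := norm_nonneg (v 1)
    have hc := norm_nonneg U
    have hlow : -(‖v 0‖ * ‖U‖ * ‖v 1‖)
        ≤ ((starRingEnd ℂ) (v 0) * U * v 1).re := by
      rcases abs_le.mp habs with ⟨h, _⟩; linarith
    have h5 : ‖U‖ ≤ Real.sqrt x * Real.sqrt y := by
      have e : ‖U‖ = Real.sqrt (‖U‖ ^ 2) := (Real.sqrt_sq hc).symm
      rw [e, ← Real.sqrt_mul hx y]
      exact Real.sqrt_le_sqrt h4
    have key2 : 2 * (‖v 0‖ * ‖U‖ * ‖v 1‖)
        ≤ x * ‖v 0‖ ^ 2 + y * ‖v 1‖ ^ 2 := by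
      have e1 : x * ‖v 0‖ ^ 2 = (Real.sqrt x * ‖v 0‖) ^ 2 := by
        rw [mul_pow, Real.sq_sqrt hx]
      have e2 : y * ‖v 1‖ ^ 2 = (Real.sqrt y * ‖v 1‖) ^ 2 := by
        rw [mul_pow, Real.sq_sqrt hy]
      rw [e1, e2]
      nlinarith [sq_nonneg (Real.sqrt x * ‖v 0‖ - Real.sqrt y * ‖v 1‖),
        mul_nonneg (mul_nonneg ha hb) (sub_nonneg.mpr h5)]
    have hre : 0 ≤ x * Complex.normSq (v 0) + y * Complex.normSq (v 1)
        + 2 * ((starRingEnd ℂ) (v 0) * U * v 1).re := by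
      rw [h2, h3]; linarith
    calc (0 : ℂ) ≤ ((x * Complex.normSq (v 0) + y * Complex.normSq (v 1)
            + 2 * ((starRingEnd ℂ) (v 0) * U * v 1).re : ℝ) : ℂ) :=
          Complex.zero_le_real.mpr hre
      _ = _ := by
          rw [← key]
          simp [dotProduct, mulVec, Fin.sum_univ_two]

lemma pauli (e1 e2 a0 a1 a2 a3 b0 b1 b2 b3 : ℝ)
    (he1 : 0 ≤ e1) (he2 : 0 ≤ e2) (hee : e1 ^ 2 + e2 ^ 2 ≤ 1)
    (ha0 : 0 ≤ a0) (hb0 : 0 ≤ b0)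
    (ha : a1 ^ 2 + a2 ^ 2 + a3 ^ 2 ≤ a0 ^ 2) (hb : b1 ^ 2 + b2 ^ 2 + b3 ^ 2 ≤ b0 ^ 2) :
    0 ≤ (a0 * b0 + e1 * e2 * (a1 * b1 + a2 * b2 + a3 * b3)) + (e1 * b0 * a3 + e2 * a0 * b3) ∧
    0 ≤ (a0 * b0 + e1 * e2 * (a1 * b1 + a2 * b2 + a3 * b3)) - (e1 * b0 * a3 + e2 * a0 * b3) ∧
    (e1 * b0 * a1 + e2 * a0 * b1) ^ 2 + (e1 * b0 * a2 + e2 * a0 * b2) ^ 2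
      ≤ ((a0 * b0 + e1 * e2 * (a1 * b1 + a2 * b2 + a3 * b3)) + (e1 * b0 * a3 + e2 * a0 * b3))
        * ((a0 * b0 + e1 * e2 * (a1 * b1 + a2 * b2 + a3 * b3)) - (e1 * b0 * a3 + e2 * a0 * b3)) := by
  have he12 : e1 * e2 ≤ 1 := by nlinarith [sq_nonneg (e1 - e2)]
  have he12' : 0 ≤ e1 * e2 := mul_nonneg he1 he2
  have hab0 : 0 ≤ a0 * b0 := mul_nonneg ha0 hb0
  have hprod : (a1 ^ 2 + a2 ^ 2 + a3 ^ 2) * (b1 ^ 2 + b2 ^ 2 + b3 ^ 2) ≤ a0 ^ 2 * b0 ^ 2 := by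
    nlinarith [sq_nonneg b1, sq_nonneg b2, sq_nonneg b3, sq_nonneg a0]
  have hCS : (a1 * b1 + a2 * b2 + a3 * b3) ^ 2 ≤ (a0 * b0) ^ 2 := by
    nlinarith [sq_nonneg (a1 * b2 - a2 * b1), sq_nonneg (a1 * b3 - a3 * b1),
      sq_nonneg (a2 * b3 - a3 * b2)]
  have hS : -(a0 * b0) ≤ a1 * b1 + a2 * b2 + a3 * b3 := by
    nlinarith [hCS, hab0]
  have hT : 0 ≤ a0 * b0 + e1 * e2 * (a1 * b1 + a2 * b2 + a3 * b3) := by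
    have h6 : 0 ≤ (1 - e1 * e2) * (a0 * b0) := mul_nonneg (by linarith) hab0
    have h7 := mul_le_mul_of_nonneg_left hS he12'
    linarith [h6, h7]
  have hM : (e1 * b0 * a1 + e2 * a0 * b1) ^ 2 + (e1 * b0 * a2 + e2 * a0 * b2) ^ 2
      + (e1 * b0 * a3 + e2 * a0 * b3) ^ 2
      ≤ (a0 * b0 + e1 * e2 * (a1 * b1 + a2 * b2 + a3 * b3)) ^ 2 := by
    nlinarith [mul_nonneg (mul_nonneg (sq_nonneg e1) (sq_nonneg b0))
        (sub_nonneg.mpr ha),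
      mul_nonneg (mul_nonneg (sq_nonneg e2) (sq_nonneg a0)) (sub_nonneg.mpr hb),
      mul_nonneg (mul_nonneg (sq_nonneg a0) (sq_nonneg b0)) (sub_nonneg.mpr hee),
      sq_nonneg (e1 * e2 * (a1 * b1 + a2 * b2 + a3 * b3))]
  set T := a0 * b0 + e1 * e2 * (a1 * b1 + a2 * b2 + a3 * b3) with hTdef
  set V3 := e1 * b0 * a3 + e2 * a0 * b3 with hV3def
  have hV3sq : V3 ^ 2 ≤ T ^ 2 := by
    have := sq_nonneg (e1 * b0 * a1 + e2 * a0 * b1)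
    have := sq_nonneg (e1 * b0 * a2 + e2 * a0 * b2)
    linarith [hM]
  refine ⟨by nlinarith [hT, hV3sq], by nlinarith [hT, hV3sq], ?_⟩
  have e : (T + V3) * (T - V3) = T ^ 2 - V3 ^ 2 := by ring
  rw [e]
  linarith [hM]

lemma key (e1 e2 p q z1 z2 r s w1 w2 : ℝ)
    (he1 : 0 ≤ e1) (he2 : 0 ≤ e2) (hee : e1 ^ 2 + e2 ^ 2 ≤ 1)
    (hp : 0 ≤ p) (hq : 0 ≤ q) (hzA : z1 ^ 2 + z2 ^ 2 ≤ p * q)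
    (hr : 0 ≤ r) (hs : 0 ≤ s) (hwB : w1 ^ 2 + w2 ^ 2 ≤ r * s) :
    0 ≤ e1 * (r + s) / 2 * p + e2 * (p + q) / 2 * r
        + ((1 - e1 - e2 - e1 * e2) / 4 * ((p + q) * (r + s))
          + e1 * e2 / 2 * (p * r + q * s + 2 * (z1 * w1 + z2 * w2))) ∧
    0 ≤ e1 * (r + s) / 2 * q + e2 * (p + q) / 2 * s
        + ((1 - e1 - e2 - e1 * e2) / 4 * ((p + q) * (r + s))
          + e1 * e2 / 2 * (p * r + q * s + 2 * (z1 * w1 + z2 * w2))) ∧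
    (e1 * (r + s) / 2 * z1 + e2 * (p + q) / 2 * w1) ^ 2
      + (e1 * (r + s) / 2 * z2 + e2 * (p + q) / 2 * w2) ^ 2
      ≤ (e1 * (r + s) / 2 * p + e2 * (p + q) / 2 * r
        + ((1 - e1 - e2 - e1 * e2) / 4 * ((p + q) * (r + s))
          + e1 * e2 / 2 * (p * r + q * s + 2 * (z1 * w1 + z2 * w2))))
        * (e1 * (r + s) / 2 * q + e2 * (p + q) / 2 * s
        + ((1 - e1 - e2 - e1 * e2) / 4 * ((p + q) * (r + s))
          + e1 * e2 / 2 * (p * r + q * s + 2 * (z1 * w1 + z2 * w2)))) := by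
  obtain ⟨c1, c2, c3⟩ := pauli e1 e2 ((p + q) / 2) z1 z2 ((p - q) / 2)
    ((r + s) / 2) w1 w2 ((r - s) / 2) he1 he2 hee (by linarith) (by linarith)
    (by nlinarith [hzA]) (by nlinarith [hwB])
  refine ⟨by nlinarith [c1], by nlinarith [c2], by nlinarith [c3]⟩

/-- The joint map. -/
def jm (η₁ η₂ : ℝ) : M4 →ₗ[ℂ] M2 where
  toFun M := Matrix.of fun i j =>
    ((η₁ / 2 : ℝ) : ℂ) * (M (i, 0) (j, 0) + M (i, 1) (j, 1))
    + ((η₂ / 2 : ℝ) : ℂ) * (M (0, i) (0, j) + M (1, i) (1, j))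
    + if i = j then
        (((1 - η₁ - η₂ - η₁ * η₂) / 4 : ℝ) : ℂ)
          * (M (0, 0) (0, 0) + M (0, 1) (0, 1) + M (1, 0) (1, 0) + M (1, 1) (1, 1))
        + ((η₁ * η₂ / 2 : ℝ) : ℂ)
          * (M (0, 0) (0, 0) + M (1, 0) (0, 1) + M (0, 1) (1, 0) + M (1, 1) (1, 1))
      else 0
  map_add' M N := by
    ext i j
    simp only [Matrix.of_apply, Matrix.add_apply]
    split <;> ring
  map_smul' c M := by
    ext i j
    simp only [Matrix.of_apply, Matrix.smul_apply, smul_eq_mul, RingHom.id_apply]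
    split <;> ring

lemma jm_apply (η₁ η₂ : ℝ) (M : M4) (i j : Fin 2) :
    jm η₁ η₂ M i j =
    ((η₁ / 2 : ℝ) : ℂ) * (M (i, 0) (j, 0) + M (i, 1) (j, 1))
    + ((η₂ / 2 : ℝ) : ℂ) * (M (0, i) (0, j) + M (1, i) (1, j))
    + if i = j then
        (((1 - η₁ - η₂ - η₁ * η₂) / 4 : ℝ) : ℂ)
          * (M (0, 0) (0, 0) + M (0, 1) (0, 1) + M (1, 0) (1, 0) + M (1, 1) (1, 1))
        + ((η₁ * η₂ / 2 : ℝ) : ℂ)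
          * (M (0, 0) (0, 0) + M (1, 0) (0, 1) + M (0, 1) (1, 0) + M (1, 1) (1, 1))
      else 0 := rfl

/-- if `η₁² + η₂² ≤ 1` then a joint map for the pair of noisy identity
qubit channels `(Λ_{η₁}, Λ_{η₂})` exists. -/
theorem min_tensor_compatible_of_le (η₁ η₂ : ℝ)
    (h₁ : 0 ≤ η₁) (h₁' : η₁ ≤ 1) (h₂ : 0 ≤ η₂) (h₂' : η₂ ≤ 1)
    (hle : η₁ ^ 2 + η₂ ^ 2 ≤ 1) :
    ∃ Λ : M4 →ₗ[ℂ] M2, IsJointMap η₁ η₂ Λ := by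
  refine ⟨jm η₁ η₂, ?_, ?_, ?_⟩
  · -- positivity
    intro A B hA hB
    obtain ⟨hp, hq, hA00, hA11, hA10, hdA⟩ := psd_entries hA
    obtain ⟨hr, hs, hB00, hB11, hB10, hdB⟩ := psd_entries hB
    set p := (A 0 0).re
    set q := (A 1 1).re
    set r := (B 0 0).re
    set s := (B 1 1).re
    set z := A 0 1 with hz
    set w := B 0 1 with hw
    have hzA : z.re ^ 2 + z.im ^ 2 ≤ p * q := by
      rw [Complex.normSq_apply] at hdA; nlinarith [hdA]
    have hwB : w.re ^ 2 + w.im ^ 2 ≤ r * s := by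
      rw [Complex.normSq_apply] at hdB; nlinarith [hdB]
    obtain ⟨k1, k2, k3⟩ := key η₁ η₂ p q z.re z.im r s w.re w.im
      h₁ h₂ hle hp hq hzA hr hs hwB
    have hMat : jm η₁ η₂ (A ⊗ₖ B) =
        !![(((η₁ * (r + s) / 2 * p + η₂ * (p + q) / 2 * r
            + ((1 - η₁ - η₂ - η₁ * η₂) / 4 * ((p + q) * (r + s))
              + η₁ * η₂ / 2 * (p * r + q * s + 2 * (z.re * w.re + z.im * w.im)))) : ℝ) : ℂ),
          ((η₁ * (r + s) / 2 : ℝ) : ℂ) * z + ((η₂ * (p + q) / 2 : ℝ) : ℂ) * w;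
          (starRingEnd ℂ) (((η₁ * (r + s) / 2 : ℝ) : ℂ) * z + ((η₂ * (p + q) / 2 : ℝ) : ℂ) * w),
          (((η₁ * (r + s) / 2 * q + η₂ * (p + q) / 2 * s
            + ((1 - η₁ - η₂ - η₁ * η₂) / 4 * ((p + q) * (r + s))
              + η₁ * η₂ / 2 * (p * r + q * s + 2 * (z.re * w.re + z.im * w.im)))) : ℝ) : ℂ)] := by
      ext i j
      fin_cases i <;> fin_cases j <;>
        · rw [jm_apply]
          simp only [Fin.mk_zero, Fin.mk_one]
          simp only [kroneckerMap_apply, hA00, hA11, hA10, hB00, hB11, hB10, ← hz, ← hw]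
          simp only [show (((0 : Fin 2) = 1)) = False from by decide,
            show (((1 : Fin 2) = 0)) = False from by decide, ite_false, reduceIte,
            Matrix.of_apply, Matrix.cons_val', Matrix.cons_val_zero, Matrix.cons_val_one,
            Matrix.head_cons, Matrix.head_fin_const, Matrix.empty_val',
            Matrix.cons_val_fin_one, Fin.isValue]
          apply Complex.ext <;>
            simp only [Complex.add_re, Complex.add_im, Complex.mul_re, Complex.mul_im,
              Complex.ofReal_re, Complex.ofReal_im, Complex.conj_re, Complex.conj_im,
              Complex.zero_re, Complex.zero_im] <;> ring
    rw [hMat]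
    apply psd2_s14
    · exact k1
    · exact k2
    · have hUre : (((η₁ * (r + s) / 2 : ℝ) : ℂ) * z + ((η₂ * (p + q) / 2 : ℝ) : ℂ) * w).re
          = η₁ * (r + s) / 2 * z.re + η₂ * (p + q) / 2 * w.re := by
        simp [Complex.add_re, Complex.mul_re]
      have hUim : (((η₁ * (r + s) / 2 : ℝ) : ℂ) * z + ((η₂ * (p + q) / 2 : ℝ) : ℂ) * w).im
          = η₁ * (r + s) / 2 * z.im + η₂ * (p + q) / 2 * w.im := by
        simp [Complex.add_im, Complex.mul_im]
      rw [Complex.normSq_apply, hUre, hUim]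
      nlinarith [k3]
  · -- first margin
    intro X
    ext i j
    rw [jm_apply]
    simp only [kroneckerMap_apply, Matrix.one_apply, noisyId, Matrix.add_apply,
      Matrix.smul_apply, smul_eq_mul, Matrix.trace_fin_two]
    fin_cases i <;> fin_cases j <;> (try simp) <;> push_cast <;> ring
  · -- second margin
    intro Y
    ext i j
    rw [jm_apply]
    simp only [kroneckerMap_apply, Matrix.one_apply, noisyId, Matrix.add_apply,
      Matrix.smul_apply, smul_eq_mul, Matrix.trace_fin_two]
    fin_cases i <;> fin_cases j <;> (try simp) <;> push_cast <;> ring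
end
end
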